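/- arXiv:2012.07972 — 8 statements merged into one kernel-verified Lean document; each statement's English description precedes it below -/
import Mathlib

section
/- Let V be a finite-dimensional vector space over a non-Archimedean valued field K, and let ‖·‖₀, ‖·‖₁ be two ultrametric norms on V diagonalized by a common basis (s₁,…,s_d). Define the geodesic norm ‖·‖ₜ for t ∈ [0,1] by ‖Σ aᵢsᵢ‖ₜ = maxᵢ |aᵢ|·‖sᵢ‖₀^{1-t}·‖sᵢ‖₁^t. Then for every v ∈ V and t ∈ [0,1], ‖v‖ₜ ≤ ‖v‖₀^{1-t}·‖v‖₁^t (log-convexity of norm geodesics). -/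
/-! Coordinatewise, `|aᵢ| · w0ᵢ^(1-t) · w1ᵢ^t = (|aᵢ| · w0ᵢ)^(1-t) · (|aᵢ| · w1ᵢ)^t`, and a maximum
of such products of powers is at most the product of the same powers of the two maxima. -/

/-- The ultrametric norm on `V` diagonalized by the basis `b`, with values `w i` on the
basis vectors: `N (∑ aᵢ sᵢ) = maxᵢ |aᵢ| · w i`. -/
noncomputable def diagNorm {K V ι : Type*} [NontriviallyNormedField K]
    [AddCommGroup V] [Module K V] [Fintype ι] [Nonempty ι]
    (b : Module.Basis ι K V) (w : ι → ℝ) (v : V) : ℝ :=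
  Finset.univ.sup' Finset.univ_nonempty fun i => ‖b.repr v i‖ * w i

lemma Real.mul_rpow_mul_rpow_of_add_eq_one {a x y p q : ℝ} (ha : 0 ≤ a) (hx : 0 ≤ x)
    (hy : 0 ≤ y) (hpq : p + q = 1) :
    a * (x ^ p * y ^ q) = (a * x) ^ p * (a * y) ^ q := by
  have ha_split : a = a ^ p * a ^ q := by
    rw [← Real.rpow_add' ha (by rw [hpq]; exact one_ne_zero), hpq, Real.rpow_one]
  rw [Real.mul_rpow ha hx, Real.mul_rpow ha hy]
  nth_rewrite 1 [ha_split]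
  ring

lemma Finset.sup'_rpow_mul_rpow_le {ι : Type*} (s : Finset ι) (hs : s.Nonempty)
    {f g : ι → ℝ} (hf : ∀ i ∈ s, 0 ≤ f i) (hg : ∀ i ∈ s, 0 ≤ g i) {p q : ℝ}
    (hp : 0 ≤ p) (hq : 0 ≤ q) :
    s.sup' hs (fun i => f i ^ p * g i ^ q) ≤ s.sup' hs f ^ p * s.sup' hs g ^ q := by
  refine Finset.sup'_le _ _ fun i hi => ?_
  have hfi : f i ≤ s.sup' hs f := Finset.le_sup' f hi
  have hgi : g i ≤ s.sup' hs g := Finset.le_sup' g hi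
  exact mul_le_mul (Real.rpow_le_rpow (hf i hi) hfi hp) (Real.rpow_le_rpow (hg i hi) hgi hq)
    (Real.rpow_nonneg (hg i hi) q) (Real.rpow_nonneg ((hf i hi).trans hfi) p)

theorem stmt_0_general {K V ι : Type*} [NontriviallyNormedField K]
    [AddCommGroup V] [Module K V] [Fintype ι] [Nonempty ι]
    (b : Module.Basis ι K V) (w0 w1 : ι → ℝ) (hw0 : ∀ i, 0 < w0 i) (hw1 : ∀ i, 0 < w1 i)
    (t : ℝ) (ht : t ∈ Set.Icc (0:ℝ) 1) (v : V) :
    diagNorm b (fun i => w0 i ^ (1 - t) * w1 i ^ t) v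
      ≤ (diagNorm b w0 v) ^ (1 - t) * (diagNorm b w1 v) ^ t := by
  obtain ⟨ht0, ht1⟩ := ht
  have hcoord : ∀ i, ‖b.repr v i‖ * (w0 i ^ (1 - t) * w1 i ^ t)
      = (‖b.repr v i‖ * w0 i) ^ (1 - t) * (‖b.repr v i‖ * w1 i) ^ t := fun i =>
    Real.mul_rpow_mul_rpow_of_add_eq_one (norm_nonneg _) (hw0 i).le (hw1 i).le (sub_add_cancel 1 t)
  simp only [diagNorm, hcoord]
  exact Finset.sup'_rpow_mul_rpow_le _ _
    (fun i _ => mul_nonneg (norm_nonneg _) (hw0 i).le)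
    (fun i _ => mul_nonneg (norm_nonneg _) (hw1 i).le) (sub_nonneg.mpr ht1) ht0

/-- Log-convexity of norm geodesics: the geodesic norm at time `t` between two ultrametric
norms codiagonalized by a basis is bounded by the geometric interpolation of the endpoint
norms. -/
theorem stmt_0 {K V ι : Type*} [NontriviallyNormedField K] [IsUltrametricDist K]
    [AddCommGroup V] [Module K V] [Fintype ι] [Nonempty ι]
    (b : Module.Basis ι K V) (w0 w1 : ι → ℝ) (hw0 : ∀ i, 0 < w0 i) (hw1 : ∀ i, 0 < w1 i)
    (t : ℝ) (ht : t ∈ Set.Icc (0:ℝ) 1) (v : V) :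
    diagNorm b (fun i => w0 i ^ (1 - t) * w1 i ^ t) v
      ≤ (diagNorm b w0 v) ^ (1 - t) * (diagNorm b w1 v) ^ t :=
  stmt_0_general b w0 w1 hw0 hw1 t ht v
end

section
/- Let V be a finite-dimensional vector space over a non-Archimedean field, with four ultrametric norms ‖·‖₀, ‖·‖₁, ‖·‖₀', ‖·‖₁' such that ‖·‖₀, ‖·‖₁ are diagonalized by a common basis, and ‖·‖₀', ‖·‖₁' are diagonalized by a common basis. If ‖·‖₀' ≤ ‖·‖₀ pointwise and ‖·‖₁' ≤ ‖·‖₁ pointwise, then for all t ∈ [0,1] the geodesic norms satisfy ‖·‖ₜ' ≤ ‖·‖ₜ pointwise (monotonicity of norm geodesics with respect to endpoints). -/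
theorem rpow_one_sub_mul_rpow_le {a b A B t : ℝ} (ha : 0 ≤ a) (hb : 0 ≤ b) (hA : a ≤ A)
    (hB : b ≤ B) (ht0 : 0 ≤ t) (ht1 : t ≤ 1) : a ^ (1 - t) * b ^ t ≤ A ^ (1 - t) * B ^ t :=
  mul_le_mul (Real.rpow_le_rpow ha hA (by linarith)) (Real.rpow_le_rpow hb hB ht0)
    (Real.rpow_nonneg hb _) (Real.rpow_nonneg (ha.trans hA) _)

section diagNorm

variable {K V ι : Type*} [NontriviallyNormedField K] [AddCommGroup V] [Module K V]
  [Fintype ι] [Nonempty ι] (b : Module.Basis ι K V) {w : ι → ℝ}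

theorem diagNorm_le_iff {v : V} {C : ℝ} :
    diagNorm b w v ≤ C ↔ ∀ i, ‖b.repr v i‖ * w i ≤ C := by
  simp [diagNorm]

theorem norm_repr_mul_le_diagNorm (v : V) (i : ι) : ‖b.repr v i‖ * w i ≤ diagNorm b w v :=
  (diagNorm_le_iff b).1 le_rfl i

theorem diagNorm_nonneg (hw : ∀ i, 0 ≤ w i) (v : V) : 0 ≤ diagNorm b w v :=
  (mul_nonneg (norm_nonneg _) (hw (Classical.arbitrary ι))).trans
    (norm_repr_mul_le_diagNorm b v _)

theorem diagNorm_basis_le (hw : ∀ i, 0 ≤ w i) (i : ι) : diagNorm b w (b i) ≤ w i := by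
  refine (diagNorm_le_iff b).2 fun j => ?_
  rcases eq_or_ne j i with rfl | hji
  · simp
  · simpa [Finsupp.single_eq_of_ne hji] using hw i

theorem diagNorm_smul_le (c : K) (v : V) : diagNorm b w (c • v) ≤ ‖c‖ * diagNorm b w v := by
  refine (diagNorm_le_iff b).2 fun i => ?_
  rw [map_smul, Finsupp.smul_apply, smul_eq_mul, norm_mul, mul_assoc]
  exact mul_le_mul_of_nonneg_left (norm_repr_mul_le_diagNorm b v i) (norm_nonneg c)

theorem isNonarchimedean_diagNorm [IsUltrametricDist K] (hw : ∀ i, 0 ≤ w i) :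
    IsNonarchimedean (diagNorm b w) := by
  intro x y
  refine (diagNorm_le_iff b).2 fun i => ?_
  calc ‖b.repr (x + y) i‖ * w i ≤ max ‖b.repr x i‖ ‖b.repr y i‖ * w i := by
        rw [map_add, Finsupp.add_apply]
        exact mul_le_mul_of_nonneg_right (IsUltrametricDist.norm_add_le_max _ _) (hw i)
    _ = max (‖b.repr x i‖ * w i) (‖b.repr y i‖ * w i) := max_mul_of_nonneg _ _ (hw i)
    _ ≤ max (diagNorm b w x) (diagNorm b w y) :=
        max_le_max (norm_repr_mul_le_diagNorm b x i) (norm_repr_mul_le_diagNorm b y i)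

theorem le_diagNorm_of_apply_basis_le {N : V → ℝ} (hN : IsNonarchimedean N)
    (hsmul : ∀ (c : K) v, N (c • v) ≤ ‖c‖ * N v) (hb : ∀ i, N (b i) ≤ w i) (v : V) :
    N v ≤ diagNorm b w v := by
  conv_lhs => rw [← b.sum_repr v]
  refine (hN.apply_sum_le_sup Finset.univ_nonempty).trans (Finset.sup'_le _ _ fun i _ => ?_)
  exact (hsmul _ _).trans <| (mul_le_mul_of_nonneg_left (hb i) (norm_nonneg _)).trans
    (norm_repr_mul_le_diagNorm b v i)

theorem diagNorm_geodesic_le {w0 w1 : ι → ℝ} (hw0 : ∀ i, 0 ≤ w0 i) (hw1 : ∀ i, 0 ≤ w1 i)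
    {t : ℝ} (ht0 : 0 ≤ t) (ht1 : t ≤ 1) (v : V) :
    diagNorm b (fun i => w0 i ^ (1 - t) * w1 i ^ t) v
      ≤ diagNorm b w0 v ^ (1 - t) * diagNorm b w1 v ^ t := by
  refine (diagNorm_le_iff b).2 fun i => ?_
  have hc : 0 ≤ ‖b.repr v i‖ := norm_nonneg _
  calc ‖b.repr v i‖ * (w0 i ^ (1 - t) * w1 i ^ t)
      = (‖b.repr v i‖ * w0 i) ^ (1 - t) * (‖b.repr v i‖ * w1 i) ^ t := by
        rw [Real.mul_rpow hc (hw0 i), Real.mul_rpow hc (hw1 i), mul_mul_mul_comm,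
          ← Real.rpow_add' hc (by norm_num), sub_add_cancel, Real.rpow_one]
    _ ≤ diagNorm b w0 v ^ (1 - t) * diagNorm b w1 v ^ t :=
        rpow_one_sub_mul_rpow_le (mul_nonneg hc (hw0 i)) (mul_nonneg hc (hw1 i))
          (norm_repr_mul_le_diagNorm b v i) (norm_repr_mul_le_diagNorm b v i) ht0 ht1

end diagNorm

/-- Monotonicity of norm geodesics with respect to endpoints: if `N₀' ≤ N₀` and `N₁' ≤ N₁`
pointwise (each pair being codiagonalized by a basis), then the geodesic norms satisfy
`Nₜ' ≤ Nₜ` pointwise for all `t ∈ [0,1]`. -/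
theorem stmt_1 {K V ι ι' : Type*} [NontriviallyNormedField K] [IsUltrametricDist K]
    [AddCommGroup V] [Module K V] [Fintype ι] [Nonempty ι] [Fintype ι'] [Nonempty ι']
    (b : Module.Basis ι K V) (b' : Module.Basis ι' K V)
    (w0 w1 : ι → ℝ) (w0' w1' : ι' → ℝ)
    (hw0 : ∀ i, 0 < w0 i) (hw1 : ∀ i, 0 < w1 i)
    (hw0' : ∀ i, 0 < w0' i) (hw1' : ∀ i, 0 < w1' i)
    (h0 : ∀ v, diagNorm b' w0' v ≤ diagNorm b w0 v)
    (h1 : ∀ v, diagNorm b' w1' v ≤ diagNorm b w1 v) :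
    ∀ t ∈ Set.Icc (0:ℝ) 1, ∀ v,
      diagNorm b' (fun i => w0' i ^ (1 - t) * w1' i ^ t) v
        ≤ diagNorm b (fun i => w0 i ^ (1 - t) * w1 i ^ t) v := by
  rintro t ⟨ht0, ht1⟩
  have hw0' := fun i => (hw0' i).le
  have hw1' := fun i => (hw1' i).le
  have hwt' (i : ι') : 0 ≤ w0' i ^ (1 - t) * w1' i ^ t :=
    mul_nonneg (Real.rpow_nonneg (hw0' i) _) (Real.rpow_nonneg (hw1' i) _)
  refine le_diagNorm_of_apply_basis_le b (isNonarchimedean_diagNorm b' hwt')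
    (diagNorm_smul_le b') fun i => ?_
  calc _ ≤ diagNorm b' w0' (b i) ^ (1 - t) * diagNorm b' w1' (b i) ^ t :=
        diagNorm_geodesic_le b' hw0' hw1' ht0 ht1 (b i)
    _ ≤ w0 i ^ (1 - t) * w1 i ^ t :=
        rpow_one_sub_mul_rpow_le (diagNorm_nonneg b' hw0' _) (diagNorm_nonneg b' hw1' _)
          ((h0 _).trans (diagNorm_basis_le b (fun j => (hw0 j).le) i))
          ((h1 _).trans (diagNorm_basis_le b (fun j => (hw1 j).le) i)) ht0 ht1
end

section
/- Let ‖·‖₀, ‖·‖₁ be ultrametric norms on a d-dimensional vector space V over a non-Archimedean field, codiagonalized by a basis, and let ‖·‖ₜ be the geodesic joining them. Then t ↦ det(‖·‖ₜ) is the one-dimensional geodesic joining det(‖·‖₀) and det(‖·‖₁) in Λ^d V; concretely, det‖·‖ₜ(s₁∧⋯∧s_d) = (det‖·‖₀(s₁∧⋯∧s_d))^{1-t}·(det‖·‖₁(s₁∧⋯∧s_d))^t for a codiagonalizing basis (sᵢ). -/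
theorem stmt_3_general {ι : Type*} [Fintype ι]
    (w0 w1 : ι → ℝ) (hw0 : ∀ i, 0 < w0 i) (hw1 : ∀ i, 0 < w1 i) :
    ∀ t ∈ Set.Icc (0:ℝ) 1,
      ∏ i, (w0 i ^ (1 - t) * w1 i ^ t)
        = (∏ i, w0 i) ^ (1 - t) * (∏ i, w1 i) ^ t := by
  intro t _
  rw [Finset.prod_mul_distrib,
    Real.finsetProd_rpow _ _ fun i _ => (hw0 i).le,
    Real.finsetProd_rpow _ _ fun i _ => (hw1 i).le]

/-- The determinant norm of the geodesic of two ultrametric norms codiagonalized by a basis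
`(sᵢ)` (with values `w0 i`, `w1 i` on the basis) is the one-dimensional geodesic of the
determinant norms: concretely, `det‖·‖ₜ(s₁∧⋯∧s_d) = ∏ᵢ (w0 i)^(1-t) (w1 i)^t` equals
`(det‖·‖₀(s₁∧⋯∧s_d))^(1-t) · (det‖·‖₁(s₁∧⋯∧s_d))^t = (∏ᵢ w0 i)^(1-t) · (∏ᵢ w1 i)^t`. -/
theorem stmt_3 {ι : Type*} [Fintype ι] [Nonempty ι]
    (w0 w1 : ι → ℝ) (hw0 : ∀ i, 0 < w0 i) (hw1 : ∀ i, 0 < w1 i) :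
    ∀ t ∈ Set.Icc (0:ℝ) 1,
      ∏ i, (w0 i ^ (1 - t) * w1 i ^ t)
        = (∏ i, w0 i) ^ (1 - t) * (∏ i, w1 i) ^ t :=
  stmt_3_general w0 w1 hw0 hw1
end

section
/- Let ‖·‖ₜ and ‖·‖ₜ' be two geodesics of diagonalizable ultrametric norms on a d-dimensional vector space V over a non-Archimedean field. Then the relative volume vol(‖·‖ₜ, ‖·‖ₜ') = log(det‖·‖ₜ' / det‖·‖ₜ) is an affine function of t ∈ [0,1]. -/
open Finset Real

theorem log_prod_rpow_mul_rpow {ι : Type*} (s : Finset ι) {u v : ι → ℝ}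
    (hu : ∀ i ∈ s, 0 < u i) (hv : ∀ i ∈ s, 0 < v i) (a b : ℝ) :
    log (∏ i ∈ s, (u i ^ a * v i ^ b))
      = a * ∑ i ∈ s, log (u i) + b * ∑ i ∈ s, log (v i) := by
  have hua : ∀ i ∈ s, 0 < u i ^ a := fun i hi => rpow_pos_of_pos (hu i hi) a
  have hvb : ∀ i ∈ s, 0 < v i ^ b := fun i hi => rpow_pos_of_pos (hv i hi) b
  rw [log_prod fun i hi => (mul_pos (hua i hi) (hvb i hi)).ne', mul_sum, mul_sum,
    ← sum_add_distrib]
  refine sum_congr rfl fun i hi => ?_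
  rw [log_mul (hua i hi).ne' (hvb i hi).ne', log_rpow (hu i hi), log_rpow (hv i hi)]

theorem stmt_4_general {ι : Type*} [Fintype ι]
    (w0 w1 w0' w1' : ι → ℝ)
    (hw0 : ∀ i, 0 < w0 i) (hw1 : ∀ i, 0 < w1 i)
    (hw0' : ∀ i, 0 < w0' i) (hw1' : ∀ i, 0 < w1' i) :
    ∃ α β : ℝ, ∀ t ∈ Set.Icc (0:ℝ) 1,
      Real.log (∏ i, (w0' i ^ (1 - t) * w1' i ^ t))
        - Real.log (∏ i, (w0 i ^ (1 - t) * w1 i ^ t)) = α + β * t := by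
  set vol₀ := ∑ i, log (w0' i) - ∑ i, log (w0 i)
  set vol₁ := ∑ i, log (w1' i) - ∑ i, log (w1 i)
  refine ⟨vol₀, vol₁ - vol₀, fun t _ => ?_⟩
  rw [log_prod_rpow_mul_rpow _ (fun i _ => hw0' i) (fun i _ => hw1' i),
    log_prod_rpow_mul_rpow _ (fun i _ => hw0 i) (fun i _ => hw1 i)]
  ring

/-- The relative volume `vol(‖·‖ₜ, ‖·‖ₜ') = log(det‖·‖ₜ'/det‖·‖ₜ)` of two geodesics of
diagonalizable ultrametric norms on a `d`-dimensional space is an affine function of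
`t ∈ [0,1]`.  Here each geodesic is given by geometric interpolation of the weights
`w0, w1` (resp. `w0', w1'`) on a codiagonalizing basis, and the determinant norm of a
diagonal norm is the product of its weights. -/
theorem stmt_4 {ι : Type*} [Fintype ι] [Nonempty ι]
    (w0 w1 w0' w1' : ι → ℝ)
    (hw0 : ∀ i, 0 < w0 i) (hw1 : ∀ i, 0 < w1 i)
    (hw0' : ∀ i, 0 < w0' i) (hw1' : ∀ i, 0 < w1' i) :
    ∃ α β : ℝ, ∀ t ∈ Set.Icc (0:ℝ) 1,
      Real.log (∏ i, (w0' i ^ (1 - t) * w1' i ^ t))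
        - Real.log (∏ i, (w0 i ^ (1 - t) * w1 i ^ t)) = α + β * t :=
  stmt_4_general w0 w1 w0' w1' hw0 hw1 hw0' hw1'
end

section
/- Let f : [0,1] × ℝᵖ → ℝ be given by f(t,z) = maxᵢ (zᵢ + t·λᵢ + cᵢ) for finitely many fixed real constants λᵢ, cᵢ (i ∈ I, I finite nonempty). Then the marginal g(z) = inf_{t∈[0,1]} f(t,z) is a convex piecewise-linear function of z ∈ ℝᵖ. Moreover g is nondecreasing in each coordinate and satisfies g(z₁+C,…,z_p+C) = g(z) + C for every real constant C. -/
/-!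
For fixed `z`, put `a = z + c`. Every `t ∈ [0,1]` has `maxᵢ (aᵢ + t λᵢ)` bounded below by
`aᵢ + min λᵢ 0`, and, whenever `λᵢ < 0 < λⱼ`, by the convex combination of the lines `i` and `j`
whose weights make the slope vanish. Conversely, if `G` dominates all these bounds, the
constraints `aᵢ + t λᵢ ≤ G` on `t ∈ [0,1]` are pairwise compatible, hence simultaneously
satisfiable. So the marginal is the maximum of these finitely many bounds; each is affine in `z`
with weights forming a probability vector, which yields convexity, monotonicity and
equivariance under adding constants.
-/

open Finset

section MaxAffine

variable {κ ι : Type*} [Fintype κ] [Nonempty κ] [Fintype ι]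

noncomputable def maxAffine (A : κ → ι → ℝ) (B : κ → ℝ) (z : ι → ℝ) : ℝ :=
  univ.sup' univ_nonempty fun j => B j + A j ⬝ᵥ z

theorem le_maxAffine (A : κ → ι → ℝ) (B : κ → ℝ) (z : ι → ℝ) (j : κ) :
    B j + A j ⬝ᵥ z ≤ maxAffine A B z :=
  le_sup' (fun j => B j + A j ⬝ᵥ z) (mem_univ j)

theorem convexOn_maxAffine (A : κ → ι → ℝ) (B : κ → ℝ) :
    ConvexOn ℝ Set.univ (maxAffine A B) := by
  refine ⟨convex_univ, fun x _ y _ a b ha hb hab => sup'_le _ _ fun j _ => ?_⟩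
  calc B j + A j ⬝ᵥ (a • x + b • y) = a * (B j + A j ⬝ᵥ x) + b * (B j + A j ⬝ᵥ y) := by
        rw [dotProduct_add, dotProduct_smul, dotProduct_smul, smul_eq_mul, smul_eq_mul]
        linear_combination B j * hab.symm
    _ ≤ a * maxAffine A B x + b * maxAffine A B y := by
        gcongr <;> apply le_maxAffine

theorem monotone_maxAffine {A : κ → ι → ℝ} (hA : ∀ j, 0 ≤ A j) (B : κ → ℝ) :
    Monotone (maxAffine A B) := fun _ _ hz =>
  sup'_mono_fun fun j _ => add_le_add_right (dotProduct_le_dotProduct_of_nonneg_left hz (hA j)) _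

theorem maxAffine_add_const {A : κ → ι → ℝ} (hA : ∀ j, ∑ i, A j i = 1) (B : κ → ℝ)
    (z : ι → ℝ) (C : ℝ) : maxAffine A B (z + fun _ => C) = maxAffine A B z + C := by
  have hC : ∀ j, A j ⬝ᵥ (fun _ => C) = C := fun j => by
    simp [dotProduct, ← sum_mul, hA j]
  simp only [maxAffine, sup'_add, dotProduct_add, hC, add_assoc]

theorem maxAffine_add (A : κ → ι → ℝ) (B : κ → ℝ) (z c : ι → ℝ) :
    maxAffine A B (z + c) = maxAffine A (fun j => B j + A j ⬝ᵥ c) z := by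
  simp only [maxAffine, dotProduct_add, add_comm (A _ ⬝ᵥ z), add_assoc]

theorem maxAffine_comp_equiv {κ' : Type*} [Fintype κ'] [Nonempty κ'] (e : κ' ≃ κ)
    (A : κ → ι → ℝ) (B : κ → ℝ) : maxAffine (A ∘ e) (B ∘ e) = maxAffine A B := by
  ext z
  simp only [maxAffine, sup'_univ_eq_ciSup, Function.comp_apply]
  exact e.iSup_comp (g := fun j => B j + A j ⬝ᵥ z)

end MaxAffine

section PairBounds

variable {ι : Type*}

noncomputable def crossingWeight (lam : ι → ℝ) (i j : ι) : ℝ := lam j / (lam j - lam i)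

/-- The pair `(i, j)` encodes the lower bound `pairOffset lam (i, j) + pairWeight lam (i, j) ⬝ᵥ a`:
the slope-cancelling combination of the lines `i` and `j` if `λᵢ < 0 < λⱼ`, and otherwise line `i`
at its lowest point on `[0,1]`. -/
noncomputable def pairWeight [DecidableEq ι] (lam : ι → ℝ) (p : ι × ι) : ι → ℝ :=
  if lam p.1 < 0 ∧ 0 < lam p.2 then
    Pi.single p.1 (crossingWeight lam p.1 p.2) + Pi.single p.2 (1 - crossingWeight lam p.1 p.2)
  else Pi.single p.1 1

noncomputable def pairOffset (lam : ι → ℝ) (p : ι × ι) : ℝ :=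
  if lam p.1 < 0 ∧ 0 < lam p.2 then 0 else min (lam p.1) 0

theorem crossingWeight_mem_Icc {lam : ι → ℝ} {i j : ι} (hi : lam i < 0) (hj : 0 < lam j) :
    crossingWeight lam i j ∈ Set.Icc 0 1 := by
  have hD : 0 < lam j - lam i := by linarith
  unfold crossingWeight
  exact ⟨by positivity, (div_le_one hD).2 (by linarith)⟩

theorem crossingWeight_mul_add {lam : ι → ℝ} {i j : ι} (hi : lam i < 0) (hj : 0 < lam j) :
    crossingWeight lam i j * lam i + (1 - crossingWeight lam i j) * lam j = 0 := by
  have hD : lam j - lam i ≠ 0 := by linarith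
  unfold crossingWeight
  field_simp
  ring

variable [DecidableEq ι]

theorem pairWeight_nonneg (lam : ι → ℝ) (p : ι × ι) : 0 ≤ pairWeight lam p := by
  unfold pairWeight
  split_ifs with h
  · obtain ⟨h0, h1⟩ := crossingWeight_mem_Icc h.1 h.2
    exact add_nonneg (Pi.single_nonneg.2 h0) (Pi.single_nonneg.2 (sub_nonneg.2 h1))
  · exact Pi.single_nonneg.2 zero_le_one

variable [Fintype ι]

theorem sum_pairWeight (lam : ι → ℝ) (p : ι × ι) : ∑ i, pairWeight lam p i = 1 := by
  rw [← dotProduct_one]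
  unfold pairWeight
  split_ifs <;> simp

theorem pairOffset_add_pairWeight_dotProduct_of_crossing {lam : ι → ℝ} {i j : ι}
    (h : lam i < 0 ∧ 0 < lam j) (a : ι → ℝ) :
    pairOffset lam (i, j) + pairWeight lam (i, j) ⬝ᵥ a =
      crossingWeight lam i j * a i + (1 - crossingWeight lam i j) * a j := by
  simp [pairOffset, pairWeight, h, add_dotProduct]

theorem pairOffset_add_pairWeight_dotProduct_of_not_crossing {lam : ι → ℝ} {i j : ι}
    (h : ¬(lam i < 0 ∧ 0 < lam j)) (a : ι → ℝ) :
    pairOffset lam (i, j) + pairWeight lam (i, j) ⬝ᵥ a = a i + min (lam i) 0 := by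
  simp [pairOffset, pairWeight, h, add_comm]

end PairBounds

section MarginalOfMaxLinear

variable {ι : Type*} [Fintype ι] [Nonempty ι]

theorem exists_mem_Icc_forall_add_mul_le (a lam : ι → ℝ) (G : ℝ)
    (hsingle : ∀ i, a i + min (lam i) 0 ≤ G)
    (hcross : ∀ i j, lam i < 0 → 0 < lam j → lam i * (G - a j) ≤ lam j * (G - a i)) :
    ∃ t ∈ Set.Icc (0 : ℝ) 1, ∀ i, a i + t * lam i ≤ G := by
  let u j := if 0 < lam j then (G - a j) / lam j else 1
  let t₀ := min 1 (univ.inf' univ_nonempty u)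
  -- `t₀` is the largest `t ≤ 1` satisfying the constraints of the increasing lines.
  have le_t₀ : ∀ s ≤ 1, (∀ j, 0 < lam j → s * lam j ≤ G - a j) → s ≤ t₀ := fun s hs h =>
    le_min hs <| le_inf' _ _ fun j _ => by
      by_cases hj : 0 < lam j
      · simpa only [u, if_pos hj, le_div_iff₀ hj] using h j hj
      · simpa only [u, if_neg hj] using hs
  have t₀_mul_le : ∀ j, 0 < lam j → t₀ * lam j ≤ G - a j := fun j hj =>
    (le_div_iff₀ hj).1 <| (min_le_right _ _).trans <| (inf'_le u (mem_univ j)).trans_eq (if_pos hj)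
  refine ⟨t₀, ⟨le_t₀ 0 zero_le_one fun j hj => ?_, min_le_left _ _⟩, fun i => ?_⟩
  · have := hsingle j
    rw [min_eq_right hj.le] at this
    linarith
  rcases lt_trichotomy (lam i) 0 with hi | hi | hi
  · have hs : (G - a i) / lam i ≤ t₀ := by
      refine le_t₀ _ ?_ fun j hj => ?_
      · have := hsingle i
        rw [min_eq_left hi.le] at this
        rw [div_le_one_of_neg hi]
        linarith
      · rw [div_mul_eq_mul_div, div_le_iff_of_neg hi]
        linarith [hcross i j hi hj]
    have := (div_le_iff_of_neg hi).1 hs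
    linarith
  · simpa [hi] using hsingle i
  · linarith [t₀_mul_le i hi]

variable [DecidableEq ι]

theorem pairOffset_add_pairWeight_dotProduct_le (lam a : ι → ℝ) (p : ι × ι) {t : ℝ}
    (ht : t ∈ Set.Icc (0 : ℝ) 1) :
    pairOffset lam p + pairWeight lam p ⬝ᵥ a ≤
      univ.sup' univ_nonempty fun i => a i + t * lam i := by
  obtain ⟨i, j⟩ := p
  have le_sup (k : ι) : a k + t * lam k ≤ univ.sup' univ_nonempty fun i => a i + t * lam i :=
    le_sup' (fun i => a i + t * lam i) (mem_univ k)
  by_cases h : lam i < 0 ∧ 0 < lam j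
  · rw [pairOffset_add_pairWeight_dotProduct_of_crossing h]
    obtain ⟨hθ₀, hθ₁⟩ := crossingWeight_mem_Icc h.1 h.2
    have hθ := crossingWeight_mul_add h.1 h.2
    -- the mixing weight cancels the dependence on `t`
    calc crossingWeight lam i j * a i + (1 - crossingWeight lam i j) * a j
        = crossingWeight lam i j * (a i + t * lam i) +
            (1 - crossingWeight lam i j) * (a j + t * lam j) := by linear_combination -t * hθ
      _ ≤ crossingWeight lam i j * (univ.sup' univ_nonempty fun i => a i + t * lam i) +
            (1 - crossingWeight lam i j) * (univ.sup' univ_nonempty fun i => a i + t * lam i) := by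
          gcongr
          exacts [le_sup i, le_sup j]
      _ = _ := by ring
  · rw [pairOffset_add_pairWeight_dotProduct_of_not_crossing h]
    refine le_trans ?_ (le_sup i)
    rcases le_total 0 (lam i) with hi | hi
    · rw [min_eq_right hi]; nlinarith [ht.1]
    · rw [min_eq_left hi]; nlinarith [ht.2]

theorem iInf_Icc_sup'_eq_maxAffine (lam a : ι → ℝ) :
    ⨅ t : Set.Icc (0 : ℝ) 1, univ.sup' univ_nonempty (fun i => a i + t * lam i) =
      maxAffine (pairWeight lam) (pairOffset lam) a := by
  have hlow (t : Set.Icc (0 : ℝ) 1) : maxAffine (pairWeight lam) (pairOffset lam) a ≤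
      univ.sup' univ_nonempty fun i => a i + t * lam i :=
    sup'_le _ _ fun p _ => pairOffset_add_pairWeight_dotProduct_le lam a p t.2
  have : Nonempty (Set.Icc (0 : ℝ) 1) := ⟨⟨0, le_rfl, zero_le_one⟩⟩
  set G := maxAffine (pairWeight lam) (pairOffset lam) a
  have hsingle (i : ι) : a i + min (lam i) 0 ≤ G := by
    have hii : ¬(lam i < 0 ∧ 0 < lam i) := fun h => h.1.not_gt h.2
    simpa only [pairOffset_add_pairWeight_dotProduct_of_not_crossing hii]
      using le_maxAffine (pairWeight lam) (pairOffset lam) a (i, i)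
  have hcross (i j : ι) (hi : lam i < 0) (hj : 0 < lam j) :
      lam i * (G - a j) ≤ lam j * (G - a i) := by
    have hle := le_maxAffine (pairWeight lam) (pairOffset lam) a (i, j)
    rw [pairOffset_add_pairWeight_dotProduct_of_crossing ⟨hi, hj⟩, crossingWeight] at hle
    have hD : 0 < lam j - lam i := by linarith
    rw [div_mul_eq_mul_div, one_sub_div hD.ne', div_mul_eq_mul_div, ← add_div,
      div_le_iff₀ hD] at hle
    linarith
  obtain ⟨t, ht, hle⟩ := exists_mem_Icc_forall_add_mul_le a lam G hsingle hcross
  exact le_antisymm (ciInf_le_of_le ⟨_, Set.forall_mem_range.2 hlow⟩ ⟨t, ht⟩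
    (sup'_le _ _ fun i _ => hle i)) (le_ciInf hlow)

end MarginalOfMaxLinear

/-- The convex-analytic core of the non-Archimedean Kiselman minimum principle: for
`f(t,z) = maxᵢ (zᵢ + t·λᵢ + cᵢ)` with finitely many constants `λᵢ, cᵢ`, the marginal
`g(z) = inf_{t∈[0,1]} f(t,z)` is convex and piecewise linear (a finite maximum of affine
functions), nondecreasing in each coordinate, and satisfies `g(z + C·𝟙) = g(z) + C`. -/
theorem stmt_10 {ι : Type*} [Fintype ι] [Nonempty ι] (lam c : ι → ℝ)
    (g : (ι → ℝ) → ℝ)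
    (hg : ∀ z, g z = ⨅ t : Set.Icc (0:ℝ) 1,
      Finset.univ.sup' Finset.univ_nonempty fun i => z i + t.1 * lam i + c i) :
    ConvexOn ℝ Set.univ g ∧
    (∃ (n : ℕ) (A : Fin (n + 1) → ι → ℝ) (B : Fin (n + 1) → ℝ),
      ∀ z, g z = Finset.univ.sup' Finset.univ_nonempty
        fun j => B j + ∑ i, A j i * z i) ∧
    (∀ z z' : ι → ℝ, z ≤ z' → g z ≤ g z') ∧
    (∀ (z : ι → ℝ) (C : ℝ), g (fun i => z i + C) = g z + C) := by
  classical
  set B : ι × ι → ℝ := fun p => pairOffset lam p + pairWeight lam p ⬝ᵥ c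
  have hg_eq : g = maxAffine (pairWeight lam) B := funext fun z => by
    simp only [hg, B, ← maxAffine_add, ← iInf_Icc_sup'_eq_maxAffine, Pi.add_apply, add_right_comm]
  obtain ⟨n, hn⟩ := Nat.exists_eq_add_one_of_ne_zero (Fintype.card_ne_zero (α := ι × ι))
  let e := (Fintype.equivFinOfCardEq hn).symm
  subst hg_eq
  exact ⟨convexOn_maxAffine _ B,
    ⟨n, pairWeight lam ∘ e, B ∘ e, fun z => by rw [← maxAffine_comp_equiv e]; rfl⟩,
    fun _ _ hz => monotone_maxAffine (pairWeight_nonneg lam) B hz,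
    maxAffine_add_const (sum_pairWeight lam) B⟩
end

section
/- Let f : ℝᵖ → ℝ be a convex piecewise-linear function, nondecreasing in each coordinate, satisfying f(z₁+C,…,z_p+C) = f(z) + C for all real C. Then f is a finite maximum of affine functions f_j(z) = b_j + Σᵢ a_{i,j} zᵢ where for each j, the coefficients satisfy a_{i,j} ∈ [0,1] and Σᵢ a_{i,j} = 1. -/
/-!
Only the pieces that actually attain the maximum somewhere matter: replacing every other piece
by a copy of an attaining one leaves the maximum unchanged. An attaining piece `b + a ⬝ᵥ z` is a
supporting affine minorant of `f`, so lowering one coordinate at the contact point shows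
`aᵢ ≥ 0` by monotonicity, and translating the contact point along the diagonal by `±1` shows
`∑ aᵢ = 1` by translation equivariance.
-/

open Finset

theorem exists_sup'_comp_eq_of_attained {α κ β : Type*} [Nonempty α] [Fintype κ] [Nonempty κ]
    [LinearOrder β] {f : α → β} {g : κ → α → β}
    (hf : ∀ z, f z = univ.sup' univ_nonempty fun j => g j z) :
    ∃ σ : κ → κ, (∀ j, ∃ z, f z = g (σ j) z) ∧
      ∀ z, f z = univ.sup' univ_nonempty fun j => g (σ j) z := by
  classical
  have hattained : ∀ z, ∃ j, f z = g j z := fun z => by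
    obtain ⟨j, -, hj⟩ := exists_mem_eq_sup' univ_nonempty fun j => g j z
    exact ⟨j, (hf z).trans hj⟩
  obtain ⟨j₀, hj₀⟩ := hattained (Classical.arbitrary α)
  let σ j := if ∃ z, f z = g j z then j else j₀
  have hfix : ∀ j z, f z = g j z → σ j = j := fun j z hz => if_pos ⟨z, hz⟩
  refine ⟨σ, fun j => ?_, fun z => le_antisymm ?_ ?_⟩
  · by_cases hj : ∃ z, f z = g j z
    · obtain ⟨z, hz⟩ := hj
      exact ⟨z, by rw [hfix j z hz, hz]⟩
    · exact ⟨_, (if_neg hj : σ j = j₀) ▸ hj₀⟩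
  · obtain ⟨j, hj⟩ := hattained z
    calc f z = g (σ j) z := by rw [hfix j z hj, hj]
      _ ≤ _ := le_sup' (fun j => g (σ j) z) (mem_univ j)
  · exact sup'_le _ _ fun j _ => (hf z).symm ▸ le_sup' (fun j => g j z) (mem_univ _)

section SupportingAffine

variable {ι : Type*} [Fintype ι] {f : (ι → ℝ) → ℝ} {a z₀ : ι → ℝ} {b : ℝ}

theorem Monotone.nonneg_of_supporting (hmono : Monotone f)
    (hle : ∀ z, b + a ⬝ᵥ z ≤ f z) (hz₀ : f z₀ = b + a ⬝ᵥ z₀) (i : ι) : 0 ≤ a i := by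
  classical
  have hdrop : a ⬝ᵥ (z₀ - Pi.single i 1) = a ⬝ᵥ z₀ - a i := by
    rw [dotProduct_sub, dotProduct_single, mul_one]
  have := hle (z₀ - Pi.single i 1)
  have := hmono (show z₀ - Pi.single i 1 ≤ z₀ from sub_le_self _ (Pi.single_nonneg.mpr zero_le_one))
  linarith

theorem sum_eq_one_of_supporting (htrans : ∀ (z : ι → ℝ) (C : ℝ), f (fun i => z i + C) = f z + C)
    (hle : ∀ z, b + a ⬝ᵥ z ≤ f z) (hz₀ : f z₀ = b + a ⬝ᵥ z₀) : ∑ i, a i = 1 := by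
  have hshift : ∀ C, (∑ i, a i) * C ≤ C := fun C => by
    have hdot : a ⬝ᵥ (fun i => z₀ i + C) = a ⬝ᵥ z₀ + (∑ i, a i) * C := by
      simp only [dotProduct, mul_add, sum_add_distrib, sum_mul]
    have := hle fun i => z₀ i + C
    rw [htrans, hdot] at this
    linarith
  linarith [hshift 1, hshift (-1)]

end SupportingAffine

theorem stmt_12_general {ι : Type*} [Fintype ι] (f : (ι → ℝ) → ℝ)
    (hPL : ∃ (m : ℕ) (A₀ : Fin (m + 1) → ι → ℝ) (B₀ : Fin (m + 1) → ℝ),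
      ∀ z, f z = Finset.univ.sup' Finset.univ_nonempty
        fun j => B₀ j + ∑ i, A₀ j i * z i)
    (hmono : ∀ z z' : ι → ℝ, z ≤ z' → f z ≤ f z')
    (htrans : ∀ (z : ι → ℝ) (C : ℝ), f (fun i => z i + C) = f z + C) :
    ∃ (n : ℕ) (A : Fin (n + 1) → ι → ℝ) (B : Fin (n + 1) → ℝ),
      (∀ j i, A j i ∈ Set.Icc (0:ℝ) 1) ∧
      (∀ j, ∑ i, A j i = 1) ∧
      (∀ z, f z = Finset.univ.sup' Finset.univ_nonempty
        fun j => B j + ∑ i, A j i * z i) := by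
  obtain ⟨m, A₀, B₀, hf⟩ := hPL
  obtain ⟨σ, hattained, hfσ⟩ :=
    exists_sup'_comp_eq_of_attained (g := fun j z => B₀ j + A₀ j ⬝ᵥ z) hf
  have hle : ∀ j z, B₀ j + A₀ j ⬝ᵥ z ≤ f z := fun j z =>
    (hf z).symm ▸ le_sup' (fun j => B₀ j + A₀ j ⬝ᵥ z) (mem_univ j)
  have hnonneg : ∀ j i, 0 ≤ A₀ (σ j) i := fun j =>
    let ⟨_, hz⟩ := hattained j
    Monotone.nonneg_of_supporting hmono (hle (σ j)) hz
  have hsum : ∀ j, ∑ i, A₀ (σ j) i = 1 := fun j =>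
    let ⟨_, hz⟩ := hattained j
    sum_eq_one_of_supporting htrans (hle (σ j)) hz
  refine ⟨m, A₀ ∘ σ, B₀ ∘ σ, fun j i => ⟨hnonneg j i, ?_⟩, hsum, hfσ⟩
  exact hsum j ▸ single_le_sum (fun k _ => hnonneg j k) (mem_univ i)

/-- A convex piecewise-linear function on `ℝᵖ` (a finite maximum of affine functions)
that is nondecreasing in each coordinate and satisfies `f(z + C·𝟙) = f(z) + C` is a
finite maximum of affine functions `z ↦ bⱼ + ∑ᵢ aᵢⱼ zᵢ` whose coefficient vectors lie in
the simplex: `aᵢⱼ ∈ [0,1]` and `∑ᵢ aᵢⱼ = 1` for each `j`. -/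
theorem stmt_12 {ι : Type*} [Fintype ι] [Nonempty ι] (f : (ι → ℝ) → ℝ)
    (hPL : ∃ (m : ℕ) (A₀ : Fin (m + 1) → ι → ℝ) (B₀ : Fin (m + 1) → ℝ),
      ∀ z, f z = Finset.univ.sup' Finset.univ_nonempty
        fun j => B₀ j + ∑ i, A₀ j i * z i)
    (hmono : ∀ z z' : ι → ℝ, z ≤ z' → f z ≤ f z')
    (htrans : ∀ (z : ι → ℝ) (C : ℝ), f (fun i => z i + C) = f z + C) :
    ∃ (n : ℕ) (A : Fin (n + 1) → ι → ℝ) (B : Fin (n + 1) → ℝ),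
      (∀ j i, A j i ∈ Set.Icc (0:ℝ) 1) ∧
      (∀ j, ∑ i, A j i = 1) ∧
      (∀ z, f z = Finset.univ.sup' Finset.univ_nonempty
        fun j => B j + ∑ i, A j i * z i) :=
  stmt_12_general f hPL hmono htrans
end

section
/- Let (E, d) be a metric space of ultrametric norms on a finite-dimensional vector space V over a non-Archimedean field with d = d₁, and suppose diagonalizable norms are d₁-dense and (E,d₁) is complete. Given two norms N₀, N₁ and sequences of diagonalizable norms N₀ⁿ, N₁ⁿ with d₁(Nᵢⁿ, Nᵢ) ≤ 1/n, the geodesics Nₜⁿ between N₀ⁿ and N₁ⁿ form a d₁-Cauchy sequence for each fixed t, satisfying d₁(Nₜᵐ, Nₜⁿ) ≤ (1−t)·d₁(N₀ᵐ, N₀ⁿ) + t·d₁(N₁ᵐ, N₁ⁿ); hence the limit Nₜ = limₙ Nₜⁿ exists and is independent of the choice of approximating sequences. -/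
/-!
Metric convexity makes `(a, b) ↦ γ a b t` 1-Lipschitz on `S × S` for the max-distance. So if
`A m, A' n` both approximate `N₀` and `B m, B' n` both approximate `N₁` to within `u m`, `u n`,
the interpolants are within `u m + u n` of each other. With `A' = A, B' = B` this makes the
interpolants Cauchy, hence convergent by completeness; with `m = n` it forces any two limits
to coincide.
-/

open Filter Topology

section GeodesicExtension

variable {E : Type*} [PseudoMetricSpace E]

def IsMetricallyConvexOn (S : Set E) (γ : E → E → ℝ → E) : Prop :=
  ∀ a ∈ S, ∀ b ∈ S, ∀ a' ∈ S, ∀ b' ∈ S, ∀ t ∈ Set.Icc (0:ℝ) 1,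
    dist (γ a b t) (γ a' b' t) ≤ (1 - t) * dist a a' + t * dist b b'

theorem IsMetricallyConvexOn.dist_le_of_dist_le {S : Set E} {γ : E → E → ℝ → E}
    (hγ : IsMetricallyConvexOn S γ) {a b a' b' : E} (ha : a ∈ S) (hb : b ∈ S)
    (ha' : a' ∈ S) (hb' : b' ∈ S) {t : ℝ} (ht : t ∈ Set.Icc (0:ℝ) 1) {ε : ℝ}
    (hda : dist a a' ≤ ε) (hdb : dist b b' ≤ ε) :
    dist (γ a b t) (γ a' b' t) ≤ ε :=
  calc dist (γ a b t) (γ a' b' t) ≤ (1 - t) * dist a a' + t * dist b b' :=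
        hγ a ha b hb a' ha' b' hb' t ht
    _ ≤ (1 - t) * ε + t * ε := by
        obtain ⟨ht0, ht1⟩ := ht
        gcongr
    _ = ε := by ring

theorem IsMetricallyConvexOn.dist_le_add_of_approx {S : Set E} {γ : E → E → ℝ → E}
    (hγ : IsMetricallyConvexOn S γ) {t : ℝ} (ht : t ∈ Set.Icc (0:ℝ) 1) {x₀ x₁ : E}
    {u : ℕ → ℝ} {A B A' B' : ℕ → E} (hA : ∀ n, A n ∈ S) (hB : ∀ n, B n ∈ S)
    (hA' : ∀ n, A' n ∈ S) (hB' : ∀ n, B' n ∈ S)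
    (hAx : ∀ n, dist (A n) x₀ ≤ u n) (hBx : ∀ n, dist (B n) x₁ ≤ u n)
    (hA'x : ∀ n, dist (A' n) x₀ ≤ u n) (hB'x : ∀ n, dist (B' n) x₁ ≤ u n) (m n : ℕ) :
    dist (γ (A m) (B m) t) (γ (A' n) (B' n) t) ≤ u m + u n :=
  hγ.dist_le_of_dist_le (hA m) (hB m) (hA' n) (hB' n) ht
    ((dist_triangle_right _ _ x₀).trans (add_le_add (hAx m) (hA'x n)))
    ((dist_triangle_right _ _ x₁).trans (add_le_add (hBx m) (hB'x n)))

end GeodesicExtension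

theorem cauchySeq_of_dist_le_add {E : Type*} [PseudoMetricSpace E] {f : ℕ → E} {u : ℕ → ℝ}
    (hu : Tendsto u atTop (𝓝 0)) (hf : ∀ m n, dist (f m) (f n) ≤ u m + u n) :
    CauchySeq f := by
  refine Metric.cauchySeq_iff'.2 fun ε hε => ?_
  obtain ⟨N, hN⟩ := eventually_atTop.1 (hu.eventually (gt_mem_nhds (half_pos hε)))
  exact ⟨N, fun n hn => by linarith [hf n N, hN n hn, hN N le_rfl]⟩

theorem stmt_14_general {E : Type*} [MetricSpace E] [CompleteSpace E]
    (S : Set E)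
    (γ : E → E → ℝ → E)
    (hconv : ∀ a ∈ S, ∀ b ∈ S, ∀ a' ∈ S, ∀ b' ∈ S, ∀ t ∈ Set.Icc (0:ℝ) 1,
      dist (γ a b t) (γ a' b' t) ≤ (1 - t) * dist a a' + t * dist b b')
    (N0 N1 : E) :
    ∀ t ∈ Set.Icc (0:ℝ) 1,
      (∀ A B : ℕ → E, (∀ n, A n ∈ S) → (∀ n, B n ∈ S) →
        (∀ n, dist (A n) N0 ≤ 1 / ((n : ℝ) + 1)) →
        (∀ n, dist (B n) N1 ≤ 1 / ((n : ℝ) + 1)) →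
        (∀ m n : ℕ, dist (γ (A m) (B m) t) (γ (A n) (B n) t)
            ≤ (1 - t) * dist (A m) (A n) + t * dist (B m) (B n)) ∧
        ∃ L : E, Filter.Tendsto (fun n => γ (A n) (B n) t) Filter.atTop (nhds L)) ∧
      (∀ A B A' B' : ℕ → E,
        (∀ n, A n ∈ S) → (∀ n, B n ∈ S) → (∀ n, A' n ∈ S) → (∀ n, B' n ∈ S) →
        (∀ n, dist (A n) N0 ≤ 1 / ((n : ℝ) + 1)) →
        (∀ n, dist (B n) N1 ≤ 1 / ((n : ℝ) + 1)) →
        (∀ n, dist (A' n) N0 ≤ 1 / ((n : ℝ) + 1)) →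
        (∀ n, dist (B' n) N1 ≤ 1 / ((n : ℝ) + 1)) →
        ∀ L L' : E,
          Filter.Tendsto (fun n => γ (A n) (B n) t) Filter.atTop (nhds L) →
          Filter.Tendsto (fun n => γ (A' n) (B' n) t) Filter.atTop (nhds L') →
          L = L') := by
  have hγ : IsMetricallyConvexOn S γ := hconv
  have hu : Tendsto (fun n : ℕ => 1 / ((n : ℝ) + 1)) atTop (𝓝 0) :=
    tendsto_one_div_add_atTop_nhds_zero_nat
  intro t ht
  refine ⟨fun A B hA hB hAx hBx => ⟨fun m n => hconv _ (hA m) _ (hB m) _ (hA n) _ (hB n) t ht, ?_⟩,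
    fun A B A' B' hA hB hA' hB' hAx hBx hA'x hB'x L L' hL hL' => ?_⟩
  · exact cauchySeq_tendsto_of_complete <| cauchySeq_of_dist_le_add hu
      (hγ.dist_le_add_of_approx ht hA hB hA hB hAx hBx hAx hBx)
  · have hclose : Tendsto (fun n => dist (γ (A n) (B n) t) (γ (A' n) (B' n) t)) atTop (𝓝 0) :=
      squeeze_zero (fun _ => dist_nonneg)
        (fun n => hγ.dist_le_add_of_approx ht hA hB hA' hB' hAx hBx hA'x hB'x n n)
        (by simpa using hu.add hu)
    exact tendsto_nhds_unique (hL.congr_dist hclose) hL'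

/-- Abstract form of the construction of geodesics between non-diagonalizable norms:
in a complete metric space `E` (the space of ultrametric norms with the `d₁` distance)
with a dense subset `S` (the diagonalizable norms) carrying a geodesic interpolation `γ`
satisfying the metric convexity inequality, any two points `N₀, N₁` approximated by
sequences in `S` at distance `≤ 1/n` yield, for each fixed `t ∈ [0,1]`, a Cauchy sequence
of interpolants satisfying
`d(γ(A m, B m, t), γ(A n, B n, t)) ≤ (1−t) d(A m, A n) + t d(B m, B n)`;
hence the limit exists and is independent of the approximating sequences. -/
theorem stmt_14 {E : Type*} [MetricSpace E] [CompleteSpace E]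
    (S : Set E) (hdense : Dense S)
    (γ : E → E → ℝ → E)
    (hγS : ∀ a ∈ S, ∀ b ∈ S, ∀ t ∈ Set.Icc (0:ℝ) 1, γ a b t ∈ S)
    (hconv : ∀ a ∈ S, ∀ b ∈ S, ∀ a' ∈ S, ∀ b' ∈ S, ∀ t ∈ Set.Icc (0:ℝ) 1,
      dist (γ a b t) (γ a' b' t) ≤ (1 - t) * dist a a' + t * dist b b')
    (N0 N1 : E) :
    ∀ t ∈ Set.Icc (0:ℝ) 1,
      (∀ A B : ℕ → E, (∀ n, A n ∈ S) → (∀ n, B n ∈ S) →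
        (∀ n, dist (A n) N0 ≤ 1 / ((n : ℝ) + 1)) →
        (∀ n, dist (B n) N1 ≤ 1 / ((n : ℝ) + 1)) →
        (∀ m n : ℕ, dist (γ (A m) (B m) t) (γ (A n) (B n) t)
            ≤ (1 - t) * dist (A m) (A n) + t * dist (B m) (B n)) ∧
        ∃ L : E, Filter.Tendsto (fun n => γ (A n) (B n) t) Filter.atTop (nhds L)) ∧
      (∀ A B A' B' : ℕ → E,
        (∀ n, A n ∈ S) → (∀ n, B n ∈ S) → (∀ n, A' n ∈ S) → (∀ n, B' n ∈ S) →
        (∀ n, dist (A n) N0 ≤ 1 / ((n : ℝ) + 1)) →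
        (∀ n, dist (B n) N1 ≤ 1 / ((n : ℝ) + 1)) →
        (∀ n, dist (A' n) N0 ≤ 1 / ((n : ℝ) + 1)) →
        (∀ n, dist (B' n) N1 ≤ 1 / ((n : ℝ) + 1)) →
        ∀ L L' : E,
          Filter.Tendsto (fun n => γ (A n) (B n) t) Filter.atTop (nhds L) →
          Filter.Tendsto (fun n => γ (A' n) (B' n) t) Filter.atTop (nhds L') →
          L = L') :=
  stmt_14_general S γ hconv N0 N1
end

section
/- Let φ̂ : ℝ → (X → ℝ) be a family of bounded functions on a set X, and suppose there exist constants such that φ̂_τ = P(φ₀, φ₁ − τ) where φ₀, φ₁ are bounded functions and P(ψ, χ) ≤ min(ψ, χ) pointwise with P(ψ) = ψ when ψ ≤ χ. Then for the Legendre transform φ_t = sup_{τ∈ℝ} (tτ + φ̂_τ), there exists C₀ > 0 such that φ_t − φ₀ ≤ t·C₀ uniformly on X for all small t > 0, and there exists C₀' ∈ ℝ with C₀'·t ≤ φ_t − φ₀ uniformly; hence φ_t → φ₀ uniformly as t → 0. -/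
/-!
For `0 ≤ t ≤ 1` every term `t τ + P(φ₀, φ₁ - τ)` of the supremum is at most `φ₀ + t D`,
where `D` bounds `|φ₁ - φ₀|`: for `τ ≤ D` use `P ≤ φ₀`, for `τ ≥ D` use `P ≤ φ₁ - τ` and
`(t - 1) τ ≤ (t - 1) D`. Conversely, at `τ = -D` the envelope is `φ₀` itself, since
`φ₀ ≤ φ₁ + D`, which gives the lower bound `φ₀ - t D`. Thus `|φ_t - φ₀| ≤ t D`.
-/

open Filter Topology

section Rooftop

variable {X : Type*} (P : (X → ℝ) → (X → ℝ) → (X → ℝ)) (φ₀ φ₁ : X → ℝ)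

theorem rooftop_term_le (hPle : ∀ ψ χ : X → ℝ, ∀ x, P ψ χ x ≤ min (ψ x) (χ x))
    {x : X} {D t : ℝ} (hD : φ₁ x - φ₀ x ≤ D) (ht₀ : 0 ≤ t) (ht₁ : t ≤ 1) (τ : ℝ) :
    t * τ + P φ₀ (fun x' => φ₁ x' - τ) x ≤ φ₀ x + t * D := by
  have hP := hPle φ₀ (fun x' => φ₁ x' - τ) x
  rcases le_total τ D with hτ | hτ
  · have : t * τ ≤ t * D := mul_le_mul_of_nonneg_left hτ ht₀
    linarith [min_le_left (φ₀ x) (φ₁ x - τ)]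
  · have : (t - 1) * τ ≤ (t - 1) * D := mul_le_mul_of_nonpos_left hτ (by linarith)
    linarith [min_le_right (φ₀ x) (φ₁ x - τ)]

theorem abs_legendre_rooftop_sub_le (hPle : ∀ ψ χ : X → ℝ, ∀ x, P ψ χ x ≤ min (ψ x) (χ x))
    (hPeq : ∀ ψ χ : X → ℝ, (∀ x, ψ x ≤ χ x) → P ψ χ = ψ)
    {D t : ℝ} (hD : ∀ x, |φ₁ x - φ₀ x| ≤ D) (ht₀ : 0 ≤ t) (ht₁ : t ≤ 1) (x : X) :
    |(⨆ τ : ℝ, (t * τ + P φ₀ (fun x' => φ₁ x' - τ) x)) - φ₀ x| ≤ t * D := by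
  have hterm := rooftop_term_le P φ₀ φ₁ hPle (abs_le.1 (hD x)).2 ht₀ ht₁
  have henv : P φ₀ (fun x' => φ₁ x' - -D) = φ₀ :=
    hPeq _ _ fun y => by linarith [(abs_le.1 (hD y)).1]
  have hlower : t * -D + φ₀ x ≤ ⨆ τ : ℝ, (t * τ + P φ₀ (fun x' => φ₁ x' - τ) x) := by
    simpa only [henv] using le_ciSup ⟨_, Set.forall_mem_range.2 hterm⟩ (-D)
  rw [abs_le]
  constructor <;> linarith [ciSup_le hterm]

end Rooftop

theorem tendstoUniformly_nhdsGT_zero_of_abs_sub_le_mul {X : Type*} {F : ℝ → X → ℝ}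
    {f : X → ℝ} {C : ℝ} (h : ∀ t ∈ Set.Ioc (0 : ℝ) 1, ∀ x, |F t x - f x| ≤ t * C) :
    TendstoUniformly F f (𝓝[>] 0) := by
  have hlin : Tendsto (fun t : ℝ => t * C) (𝓝[>] 0) (𝓝 0) := by
    simpa using ((tendsto_id (x := 𝓝 (0 : ℝ))).mul_const C).mono_left nhdsWithin_le_nhds
  refine Metric.tendstoUniformly_iff.2 fun ε hε => ?_
  filter_upwards [hlin.eventually (gt_mem_nhds hε), Ioo_mem_nhdsGT one_pos] with t hε' ht x
  rw [dist_comm, Real.dist_eq]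
  exact (h t ⟨ht.1, ht.2.le⟩ x).trans_lt hε'

/-- Endpoint continuity of the Legendre transform of rooftop envelopes: given bounded
functions `φ₀, φ₁` on `X` and a rooftop-envelope operator `P` with `P(ψ,χ) ≤ min(ψ,χ)`
and `P(ψ,χ) = ψ` whenever `ψ ≤ χ`, the Legendre transform
`φ_t = sup_{τ∈ℝ} (tτ + P(φ₀, φ₁ − τ))` satisfies: there is `C₀ > 0` with
`φ_t − φ₀ ≤ t·C₀` uniformly for all small `t > 0`, and there is `C₀' ∈ ℝ` with
`C₀'·t ≤ φ_t − φ₀` uniformly; hence `φ_t → φ₀` uniformly as `t → 0⁺`. -/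
theorem stmt_15 {X : Type*}
    (P : (X → ℝ) → (X → ℝ) → (X → ℝ))
    (hPle : ∀ ψ χ : X → ℝ, ∀ x, P ψ χ x ≤ min (ψ x) (χ x))
    (hPeq : ∀ ψ χ : X → ℝ, (∀ x, ψ x ≤ χ x) → P ψ χ = ψ)
    (φ₀ φ₁ : X → ℝ) (M : ℝ)
    (hb0 : ∀ x, |φ₀ x| ≤ M) (hb1 : ∀ x, |φ₁ x| ≤ M)
    (Φ : ℝ → X → ℝ)
    (hΦ : ∀ t x, Φ t x = ⨆ τ : ℝ, (t * τ + P φ₀ (fun x' => φ₁ x' - τ) x)) :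
    (∃ C₀ > (0:ℝ), ∃ ε > (0:ℝ), ∀ t ∈ Set.Ioc (0:ℝ) ε, ∀ x, Φ t x - φ₀ x ≤ t * C₀) ∧
    (∃ C₀' : ℝ, ∃ ε > (0:ℝ), ∀ t ∈ Set.Ioc (0:ℝ) ε, ∀ x, C₀' * t ≤ Φ t x - φ₀ x) ∧
    TendstoUniformly Φ φ₀ (nhdsWithin 0 (Set.Ioi 0)) := by
  have hD : ∀ x, |φ₁ x - φ₀ x| ≤ 2 * |M| := fun x =>
    calc |φ₁ x - φ₀ x| ≤ |φ₁ x| + |φ₀ x| := abs_sub _ _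
      _ ≤ 2 * |M| := by linarith [hb0 x, hb1 x, le_abs_self M]
  have hbound : ∀ t ∈ Set.Ioc (0 : ℝ) 1, ∀ x, |Φ t x - φ₀ x| ≤ t * (2 * |M|) :=
    fun t ht x => hΦ t x ▸ abs_legendre_rooftop_sub_le P φ₀ φ₁ hPle hPeq hD ht.1.le ht.2 x
  refine ⟨⟨2 * |M| + 1, by positivity, 1, one_pos, fun t ht x => ?_⟩,
    ⟨-(2 * |M|), 1, one_pos, fun t ht x => ?_⟩,
    tendstoUniformly_nhdsGT_zero_of_abs_sub_le_mul hbound⟩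
  · nlinarith [(abs_le.1 (hbound t ht x)).2, ht.1]
  · linarith [(abs_le.1 (hbound t ht x)).1]
end
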